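/- arXiv:2108.12647 — 5 statements merged into one kernel-verified Lean document; each statement's English description precedes it below -/
import Mathlib

section
/- If (X, Y, Z) is a Markov triangle of finite random variables on a probability space (Ω, Σ, μ), then the conditional entropies satisfy H(Z|X) = H(Z|Y) + H(Y|X). -/
open MeasureTheory Filter Topology

/-- A finite random variable on a measurable space `Ω`: a map into a finite set whose
fibers are measurable. -/
structure FRV (Ω : Type) [MeasurableSpace Ω] where
  α : Type
  fintype : Fintype α
  X : Ω → α
  meas : ∀ a : α, MeasurableSet (X ⁻¹' {a})

attribute [instance] FRV.fintype

/-- A probability distribution on a finite set. -/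
def IsProbDist {β : Type} [Fintype β] (p : β → ℝ) : Prop :=
  (∀ b, 0 ≤ p b) ∧ ∑ b, p b = 1

/-- Shannon entropy of a distribution on a finite set. -/
noncomputable def entropyOfDist {β : Type} [Fintype β] (p : β → ℝ) : ℝ :=
  -∑ b, p b * Real.log (p b)

namespace FRV

variable {Ω Ω' : Type} [MeasurableSpace Ω] [MeasurableSpace Ω']

/-- The probability mass function of a finite random variable. -/
noncomputable def pmf (μ : Measure Ω) (X : FRV Ω) : X.α → ℝ :=
  fun a => (μ (X.X ⁻¹' {a})).toReal

/-- The Shannon entropy of a finite random variable. -/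
noncomputable def entropy (μ : Measure Ω) (X : FRV Ω) : ℝ :=
  entropyOfDist (X.pmf μ)

/-- The canonical product `𝒫(X,Y)` of two finite random variables on a common space. -/
def prod (X Y : FRV Ω) : FRV Ω where
  α := X.α × Y.α
  fintype := inferInstance
  X := fun ω => (X.X ω, Y.X ω)
  meas := by
    rintro ⟨a, b⟩
    have h : (fun ω => (X.X ω, Y.X ω)) ⁻¹' {(a, b)} = X.X ⁻¹' {a} ∩ Y.X ⁻¹' {b} := by
      ext ω; simp [Prod.ext_iff]
    rw [h]
    exact (X.meas a).inter (Y.meas b)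

/-- Post-composition of a finite random variable with a map of finite sets. -/
def map (X : FRV Ω) {β : Type} [Fintype β] (f : X.α → β) : FRV Ω where
  α := β
  fintype := inferInstance
  X := f ∘ X.X
  meas := by
    intro b
    have h : (f ∘ X.X) ⁻¹' {b} = ⋃ a ∈ {a | f a = b}, X.X ⁻¹' {a} := by
      ext ω; simp
    rw [h]
    exact MeasurableSet.biUnion (Set.to_countable _) fun a _ => X.meas a

/-- Pullback of a finite random variable along a measurable map. -/
def comap (X : FRV Ω) (π : Ω' → Ω) (hπ : Measurable π) : FRV Ω' where
  α := X.α
  fintype := X.fintype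
  X := X.X ∘ π
  meas := by
    intro a
    rw [Set.preimage_comp]
    exact hπ (X.meas a)

/-- A constant random variable: one whose support is a one-element set. -/
def IsConstant (C : FRV Ω) : Prop := ∀ a b : C.α, a = b

/-- Weak convergence (convergence in distribution) of a sequence of finite random
variables: eventually the supports coincide, and the probability mass functions
converge pointwise. -/
def WeakConv (μ : Measure Ω) (Xs : ℕ → FRV Ω) (X : FRV Ω) : Prop :=
  (∃ N, ∀ n ≥ N, (Xs n).α = X.α) ∧
  ∀ a : X.α,
    Tendsto
      (fun n => @dite _ ((Xs n).α = X.α) (Classical.dec _)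
        (fun h => (Xs n).pmf μ (cast h.symm a)) (fun _ => 0))
      atTop (𝓝 (X.pmf μ a))

/-- Weak convergence of a sequence of pairs of finite random variables: weak convergence
of the canonical products. -/
def WeakConvPair (μ : Measure Ω) (Xs Ys : ℕ → FRV Ω) (X Y : FRV Ω) : Prop :=
  WeakConv μ (fun n => (Xs n).prod (Ys n)) (X.prod Y)

/-- The discrete measure on a finite set associated with a real-valued weight function. -/
noncomputable def discMeasure {𝒳 : Type} [Fintype 𝒳] [MeasurableSpace 𝒳] (p : 𝒳 → ℝ) :
    Measure 𝒳 :=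
  Measure.sum fun x => ENNReal.ofReal (p x) • Measure.dirac x

/-- The `p`-weighted convex sum of a family of finite random variables, a random variable
on `𝒳 × Ω` valued in the disjoint union `Σ x, 𝒴ˣ` (the weights `p` enter through the
product measure `(discMeasure p).prod μ` on `𝒳 × Ω`). -/
def convexSum {𝒳 : Type} [Fintype 𝒳] [MeasurableSpace 𝒳] [MeasurableSingletonClass 𝒳]
    (Y : 𝒳 → FRV Ω) : FRV (𝒳 × Ω) where
  α := Σ x : 𝒳, (Y x).α
  fintype := inferInstance
  X := fun q => ⟨q.1, (Y q.1).X q.2⟩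
  meas := by
    rintro ⟨x₀, y₀⟩
    have h : (fun q : 𝒳 × Ω => (⟨q.1, (Y q.1).X q.2⟩ : Σ x : 𝒳, (Y x).α)) ⁻¹' {⟨x₀, y₀⟩}
        = {x₀} ×ˢ ((Y x₀).X ⁻¹' {y₀}) := by
      ext ⟨x, ω⟩
      simp only [Set.mem_preimage, Set.mem_singleton_iff, Set.mem_prod, Sigma.mk.inj_iff]
      constructor
      · rintro ⟨rfl, h2⟩
        exact ⟨rfl, eq_of_heq h2⟩
      · rintro ⟨rfl, h2⟩
        exact ⟨rfl, heq_of_eq h2⟩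
    rw [h]
    exact (measurableSet_singleton x₀).prod ((Y x₀).meas y₀)

end FRV

section InfoMeasures

variable {Ω : Type} [MeasurableSpace Ω]

/-- The joint distribution function `ϑ(x,y) = μ(X⁻¹{x} ∩ Y⁻¹{y})` of a pair of finite
random variables. -/
noncomputable def jointDist (μ : Measure Ω) (X Y : FRV Ω) : X.α → Y.α → ℝ :=
  fun a b => (μ (X.X ⁻¹' {a} ∩ Y.X ⁻¹' {b})).toReal

/-- The joint entropy `H(X,Y)` of a pair of finite random variables. -/
noncomputable def jointEntropy (μ : Measure Ω) (X Y : FRV Ω) : ℝ :=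
  -∑ a, ∑ b, jointDist μ X Y a b * Real.log (jointDist μ X Y a b)

/-- The mutual information `I(X,Y) = H(X) + H(Y) - H(X,Y)`. -/
noncomputable def mutualInfo (μ : Measure Ω) (X Y : FRV Ω) : ℝ :=
  X.entropy μ + Y.entropy μ - jointEntropy μ X Y

/-- The conditional distribution `q(y|x)` of `Y` given `X = x`. -/
noncomputable def condDist (μ : Measure Ω) (X Y : FRV Ω) : X.α → Y.α → ℝ :=
  fun a b => if X.pmf μ a ≠ 0 then jointDist μ X Y a b / X.pmf μ a else 0

/-- The conditional entropy `H(Y|X) = ∑ₓ p(x) H(q(·|x))`. -/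
noncomputable def condEntropy (μ : Measure Ω) (X Y : FRV Ω) : ℝ :=
  ∑ a, X.pmf μ a * entropyOfDist (condDist μ X Y a)

/-- `h : 𝒵 × 𝒳 → 𝒴` is a mediator function for the triple `(X, Y, Z)` if
`r(z|x) = p(z|h(z,x)) · q(h(z,x)|x)` for all `(z,x)`. -/
def IsMediator (μ : Measure Ω) (X Y Z : FRV Ω) (h : Z.α × X.α → Y.α) : Prop :=
  ∀ z x, condDist μ X Z x z = condDist μ Y Z (h (z, x)) z * condDist μ X Y x (h (z, x))

/-- A triple `(X, Y, Z)` of finite random variables is a Markov triangle if it admits a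
mediator function. -/
def IsMarkovTriangle (μ : Measure Ω) (X Y Z : FRV Ω) : Prop :=
  ∃ h : Z.α × X.α → Y.α, IsMediator μ X Y Z h

end InfoMeasures

/-- A map assigning a real number to every ordered pair of finite random variables
defined on a common probability space. -/
abbrev PairFunctional :=
  ∀ (Ω : Type) [MeasurableSpace Ω], Measure Ω → FRV Ω → FRV Ω → ℝ

namespace PF

/-- `F` is non-negative. -/
def Nonneg (F : PairFunctional) : Prop :=
  ∀ (Ω : Type) [MeasurableSpace Ω] (μ : Measure Ω) [IsProbabilityMeasure μ]
    (X Y : FRV Ω), 0 ≤ F Ω μ X Y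

/-- `F` is symmetric. -/
def Symm (F : PairFunctional) : Prop :=
  ∀ (Ω : Type) [MeasurableSpace Ω] (μ : Measure Ω) [IsProbabilityMeasure μ]
    (X Y : FRV Ω), F Ω μ X Y = F Ω μ Y X

/-- `F` is continuous: it respects weak convergence of pairs. -/
def Continuous (F : PairFunctional) : Prop :=
  ∀ (Ω : Type) [MeasurableSpace Ω] (μ : Measure Ω) [IsProbabilityMeasure μ]
    (Xs Ys : ℕ → FRV Ω) (X Y : FRV Ω), FRV.WeakConvPair μ Xs Ys X Y →
    Tendsto (fun n => F Ω μ (Xs n) (Ys n)) atTop (𝓝 (F Ω μ X Y))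

/-- `F` is weakly functorial: `F(X,Z) = F(X,Y) + F(Y,Z) - F(Y,Y)` on Markov triangles. -/
def WeaklyFunctorial (F : PairFunctional) : Prop :=
  ∀ (Ω : Type) [MeasurableSpace Ω] (μ : Measure Ω) [IsProbabilityMeasure μ]
    (X Y Z : FRV Ω), IsMarkovTriangle μ X Y Z →
    F Ω μ X Z = F Ω μ X Y + F Ω μ Y Z - F Ω μ Y Y

/-- `F` is invariant under pullbacks along measure-preserving maps. -/
def PullbackInvariant (F : PairFunctional) : Prop :=
  ∀ (Ω Ω' : Type) [MeasurableSpace Ω] [MeasurableSpace Ω']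
    (μ : Measure Ω) (μ' : Measure Ω') [IsProbabilityMeasure μ] [IsProbabilityMeasure μ']
    (π : Ω' → Ω) (hπ : MeasurePreserving π μ' μ) (X Y : FRV Ω),
    F Ω μ X Y = F Ω' μ' (X.comap π hπ.measurable) (Y.comap π hπ.measurable)

/-- `F(X,C) = 0` for every constant random variable `C`. -/
def VanishesOnConstants (F : PairFunctional) : Prop :=
  ∀ (Ω : Type) [MeasurableSpace Ω] (μ : Measure Ω) [IsProbabilityMeasure μ]
    (X C : FRV Ω), C.IsConstant → F Ω μ X C = 0

/-- `F` is strongly additive: for a finite random variable `X` with probability mass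
function `p` and a family of pairs `(Yˣ, Zˣ)` indexed by the support of `X`,
`F(⊕ₓ p(x)(Yˣ,Zˣ)) = F(X,X) + ∑ₓ p(x) F(Yˣ,Zˣ)`. -/
def StronglyAdditive (F : PairFunctional) : Prop :=
  ∀ (Ω : Type) [MeasurableSpace Ω] (μ : Measure Ω) [IsProbabilityMeasure μ]
    (X : FRV Ω) (Y Z : X.α → FRV Ω),
    letI : MeasurableSpace X.α := ⊤
    letI : MeasurableSingletonClass X.α := ⟨fun _ => MeasurableSpace.measurableSet_top⟩
    F (X.α × Ω) ((FRV.discMeasure (X.pmf μ)).prod μ) (FRV.convexSum Y) (FRV.convexSum Z)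
      = F Ω μ X X + ∑ x, X.pmf μ x * F Ω μ (Y x) (Z x)

end PF

/-- Mutual information as a pair functional. -/
noncomputable def MIfun : PairFunctional := fun _ _ μ X Y => mutualInfo μ X Y

/-! Write `ϑ` for joint and `c` for conditional distributions. The mediator identity gives
`ϑ_XZ(x,z) = c_YZ(m(z,x), z) · ϑ_XY(x, m(z,x))`. Summed over a fibre of `m (·, x)`, resp. of
`m (z, ·)`, the right side is at most `ϑ_XY(x,y)`, resp. `ϑ_YZ(y,z)`; since the totals agree
(`p_X(x)`, resp. `p_Z(z)`), these fibre sums are equalities, i.e. `ϑ_XZ` pushes forward to `ϑ_XY`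
and to `ϑ_YZ`. On the support of `ϑ_XZ` the logarithm splits,
`log c_XZ(x,z) = log c_YZ(m(z,x), z) + log c_XY(x, m(z,x))`, and pushing each part forward
turns `-∑ ϑ_XZ log c_XZ` into `H(Z|Y) + H(Y|X)`. -/

theorem Finset.sum_mul_comp_eq_of_sum_fiber_le {ι κ R : Type*} [Fintype ι] [Fintype κ]
    [DecidableEq κ] [CommSemiring R] [PartialOrder R] [IsOrderedCancelAddMonoid R]
    {g : ι → κ} {f : ι → R} {F : κ → R} (hle : ∀ k, ∑ i with g i = k, f i ≤ F k)
    (htotal : ∑ i, f i = ∑ k, F k) (G : κ → R) :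
    ∑ i, f i * G (g i) = ∑ k, F k * G k := by
  have hfiber : ∀ k, ∑ i with g i = k, f i = F k := fun k =>
    (Finset.sum_eq_sum_iff_of_le fun k _ => hle k).1 (by rw [Finset.sum_fiberwise, htotal]) k
      (Finset.mem_univ k)
  calc ∑ i, f i * G (g i) = ∑ k, ∑ i with g i = k, f i * G (g i) :=
        (Finset.sum_fiberwise _ _ _).symm
    _ = ∑ k, (∑ i with g i = k, f i) * G k := by
        refine Finset.sum_congr rfl fun k _ => ?_
        rw [Finset.sum_mul]
        exact Finset.sum_congr rfl fun i hi => by rw [(Finset.mem_filter.1 hi).2]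
    _ = ∑ k, F k * G k := by simp only [hfiber]

section CondDist

variable {Ω : Type} [MeasurableSpace Ω] (μ : Measure Ω) (X Y : FRV Ω)

lemma jointDist_nonneg (x : X.α) (y : Y.α) : 0 ≤ jointDist μ X Y x y :=
  ENNReal.toReal_nonneg

lemma jointDist_comm (x : X.α) (y : Y.α) : jointDist μ X Y x y = jointDist μ Y X y x := by
  rw [jointDist, jointDist, Set.inter_comm]

lemma condDist_nonneg (x : X.α) (y : Y.α) : 0 ≤ condDist μ X Y x y := by
  unfold condDist
  split
  · exact div_nonneg (jointDist_nonneg μ X Y x y) ENNReal.toReal_nonneg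
  · exact le_rfl

variable [IsFiniteMeasure μ]

lemma jointDist_le_pmf (x : X.α) (y : Y.α) : jointDist μ X Y x y ≤ X.pmf μ x :=
  ENNReal.toReal_mono (measure_ne_top μ _) (measure_mono Set.inter_subset_left)

lemma sum_jointDist_right (x : X.α) : ∑ y, jointDist μ X Y x y = X.pmf μ x := by
  have hfibers := sum_measure_preimage_singleton (μ := μ.restrict (X.X ⁻¹' {x}))
    Finset.univ (fun y _ => Y.meas y)
  simp only [Finset.coe_univ, Set.preimage_univ, Measure.restrict_apply_univ,
    Measure.restrict_apply (Y.meas _)] at hfibers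
  rw [FRV.pmf, ← hfibers, ENNReal.toReal_sum fun y _ => measure_ne_top μ _]
  simp only [jointDist, Set.inter_comm]

lemma sum_jointDist_left (y : Y.α) : ∑ x, jointDist μ X Y x y = Y.pmf μ y := by
  simp only [jointDist_comm μ X Y, sum_jointDist_right]

lemma pmf_mul_condDist (x : X.α) (y : Y.α) :
    X.pmf μ x * condDist μ X Y x y = jointDist μ X Y x y := by
  by_cases hx : X.pmf μ x = 0
  · have hzero : jointDist μ X Y x y = 0 :=
      le_antisymm (hx ▸ jointDist_le_pmf μ X Y x y) (jointDist_nonneg μ X Y x y)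
    simp [condDist, hx, hzero]
  · simp only [condDist, ne_eq, hx, not_false_eq_true, if_true]
    field_simp

lemma sum_condDist_le_one (x : X.α) : ∑ y, condDist μ X Y x y ≤ 1 := by
  by_cases hx : X.pmf μ x = 0
  · simp [condDist, hx]
  · simp only [condDist, ne_eq, hx, not_false_eq_true, if_true]
    rw [← Finset.sum_div, sum_jointDist_right, div_self hx]

lemma condEntropy_eq_neg_sum_jointDist_mul_log :
    condEntropy μ X Y = -∑ x, ∑ y, jointDist μ X Y x y * Real.log (condDist μ X Y x y) := by
  simp only [condEntropy, entropyOfDist, mul_neg, Finset.mul_sum, ← mul_assoc,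
    pmf_mul_condDist, Finset.sum_neg_distrib]

end CondDist

namespace IsMediator

variable {Ω : Type} [MeasurableSpace Ω] {μ : Measure Ω} [IsFiniteMeasure μ] {X Y Z : FRV Ω}
  {m : Z.α × X.α → Y.α}

lemma jointDist_eq (hm : IsMediator μ X Y Z m) (x : X.α) (z : Z.α) :
    jointDist μ X Z x z = condDist μ Y Z (m (z, x)) z * jointDist μ X Y x (m (z, x)) := by
  rw [← pmf_mul_condDist μ X Z, hm z x, ← pmf_mul_condDist μ X Y]
  ring

lemma jointDist_mul_log_condDist (hm : IsMediator μ X Y Z m) (x : X.α) (z : Z.α) :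
    jointDist μ X Z x z * Real.log (condDist μ X Z x z)
      = jointDist μ X Z x z * Real.log (condDist μ Y Z (m (z, x)) z)
        + jointDist μ X Z x z * Real.log (condDist μ X Y x (m (z, x))) := by
  by_cases hzero : jointDist μ X Z x z = 0
  · simp [hzero]
  have hcond : condDist μ Y Z (m (z, x)) z * condDist μ X Y x (m (z, x)) ≠ 0 := by
    rw [← hm z x]
    rintro hcond
    exact hzero (by rw [← pmf_mul_condDist μ X Z, hcond, mul_zero])
  rw [hm z x, Real.log_mul (left_ne_zero_of_mul hcond) (right_ne_zero_of_mul hcond), mul_add]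

lemma sum_jointDist_mul_comp_left (hm : IsMediator μ X Y Z m) (x : X.α) (G : Y.α → ℝ) :
    ∑ z, jointDist μ X Z x z * G (m (z, x)) = ∑ y, jointDist μ X Y x y * G y := by
  classical
  refine Finset.sum_mul_comp_eq_of_sum_fiber_le (fun y => ?_)
    (by rw [sum_jointDist_right, sum_jointDist_right]) G
  calc ∑ z with m (z, x) = y, jointDist μ X Z x z
      = jointDist μ X Y x y * ∑ z with m (z, x) = y, condDist μ Y Z y z := by
        rw [Finset.mul_sum]
        refine Finset.sum_congr rfl fun z hz => ?_
        rw [hm.jointDist_eq, (Finset.mem_filter.1 hz).2, mul_comm]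
    _ ≤ jointDist μ X Y x y * 1 := by
        gcongr
        · exact jointDist_nonneg μ X Y x y
        · exact (Finset.sum_le_sum_of_subset_of_nonneg (Finset.filter_subset _ _)
            fun z _ _ => condDist_nonneg μ Y Z y z).trans (sum_condDist_le_one μ Y Z y)
    _ = jointDist μ X Y x y := mul_one _

lemma sum_jointDist_mul_comp_right (hm : IsMediator μ X Y Z m) (z : Z.α) (G : Y.α → ℝ) :
    ∑ x, jointDist μ X Z x z * G (m (z, x)) = ∑ y, jointDist μ Y Z y z * G y := by
  classical
  refine Finset.sum_mul_comp_eq_of_sum_fiber_le (fun y => ?_)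
    (by rw [sum_jointDist_left, sum_jointDist_left]) G
  calc ∑ x with m (z, x) = y, jointDist μ X Z x z
      = condDist μ Y Z y z * ∑ x with m (z, x) = y, jointDist μ X Y x y := by
        rw [Finset.mul_sum]
        refine Finset.sum_congr rfl fun x hx => ?_
        rw [hm.jointDist_eq, (Finset.mem_filter.1 hx).2]
    _ ≤ condDist μ Y Z y z * Y.pmf μ y := by
        gcongr
        · exact condDist_nonneg μ Y Z y z
        · exact (Finset.sum_le_sum_of_subset_of_nonneg (Finset.filter_subset _ _)
            fun x _ _ => jointDist_nonneg μ X Y x y).trans_eq (sum_jointDist_left μ X Y y)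
    _ = jointDist μ Y Z y z := by rw [mul_comm, pmf_mul_condDist]

end IsMediator

/-- If `(X,Y,Z)` is a Markov triangle, then `H(Z|X) = H(Z|Y) + H(Y|X)`. -/
theorem condEntropy_markovTriangle {Ω : Type} [MeasurableSpace Ω] (μ : Measure Ω)
    [IsProbabilityMeasure μ] (X Y Z : FRV Ω) (h : IsMarkovTriangle μ X Y Z) :
    condEntropy μ X Z = condEntropy μ Y Z + condEntropy μ X Y := by
  obtain ⟨m, hm⟩ := h
  have hXY : ∀ x, ∑ z, jointDist μ X Z x z * Real.log (condDist μ X Y x (m (z, x)))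
      = ∑ y, jointDist μ X Y x y * Real.log (condDist μ X Y x y) := fun x =>
    hm.sum_jointDist_mul_comp_left x fun y => Real.log (condDist μ X Y x y)
  have hYZ : ∑ x, ∑ z, jointDist μ X Z x z * Real.log (condDist μ Y Z (m (z, x)) z)
      = ∑ y, ∑ z, jointDist μ Y Z y z * Real.log (condDist μ Y Z y z) := by
    rw [Finset.sum_comm]
    conv_rhs => rw [Finset.sum_comm]
    exact Finset.sum_congr rfl fun z _ =>
      hm.sum_jointDist_mul_comp_right z fun y => Real.log (condDist μ Y Z y z)
  simp only [condEntropy_eq_neg_sum_jointDist_mul_log, hm.jointDist_mul_log_condDist,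
    Finset.sum_add_distrib, hXY, hYZ]
  ring
end

section
/- Let F be a map assigning a real number F(X,Y) to every ordered pair of finite random variables defined on a common probability space, and suppose F is continuous and invariant under pullbacks. If (X, Y) is a pair of finite random variables on (Ω, Σ, μ) and (X', Y') is a pair of finite random variables on (Ω', Σ', μ') such that the associated joint distribution functions ϑ : 𝒳 × 𝒴 → [0,1] and ϑ' : 𝒳 × 𝒴 → [0,1] are equal, then F(X, Y) = F(X', Y'). -/
open MeasureTheory Filter Topology

/-!
The pair `(X, Y)` is the pullback of the coordinate projections of `𝒳 × 𝒴` along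
`ω ↦ (X ω, Y ω)`, and its joint distribution is the image of `μ` under this map. Equal joint
distributions thus make `(X, Y)` and `(X', Y')` pullbacks of one and the same pair on the
probability space `𝒳 × 𝒴`, so pullback invariance gives equal values of `F`.
-/

theorem MeasureTheory.Measure.map_eq_map_of_measure_preimage_singleton_eq
    {Ω Ω' α : Type*} [MeasurableSpace Ω] [MeasurableSpace Ω'] [MeasurableSpace α] [Countable α]
    [MeasurableSingletonClass α] {μ : Measure Ω} {μ' : Measure Ω'} {f : Ω → α} {g : Ω' → α}
    (hf : Measurable f) (hg : Measurable g) (h : ∀ a, μ (f ⁻¹' {a}) = μ' (g ⁻¹' {a})) :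
    μ.map f = μ'.map g :=
  Measure.ext_of_singleton fun a => by
    rw [Measure.map_apply hf (measurableSet_singleton a),
      Measure.map_apply hg (measurableSet_singleton a), h]

theorem measurable_prodMk_of_measurableSet_preimage_singleton {Ω α β : Type*}
    [MeasurableSpace Ω] [MeasurableSpace (α × β)] [Countable α] [Countable β]
    {f : Ω → α} {g : Ω → β} (hf : ∀ a, MeasurableSet (f ⁻¹' {a}))
    (hg : ∀ b, MeasurableSet (g ⁻¹' {b})) :
    Measurable fun ω => (f ω, g ω) :=
  measurable_to_countable' fun p => by
    rw [← Set.singleton_prod_singleton, Set.mk_preimage_prod]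
    exact (hf p.1).inter (hg p.2)

theorem PF.PullbackInvariant.eq_of_map_eq {F : PairFunctional} (hF : PF.PullbackInvariant F)
    {Ω Ω' β : Type} [MeasurableSpace Ω] [MeasurableSpace Ω'] [MeasurableSpace β]
    {μ : Measure Ω} {μ' : Measure Ω'} [IsProbabilityMeasure μ] [IsProbabilityMeasure μ']
    {π : Ω → β} {π' : Ω' → β} (hπ : Measurable π) (hπ' : Measurable π')
    (h : μ.map π = μ'.map π') (X Y : FRV β) :
    F Ω μ (X.comap π hπ) (Y.comap π hπ) = F Ω' μ' (X.comap π' hπ') (Y.comap π' hπ') := by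
  have := Measure.isProbabilityMeasure_map (μ := μ) hπ.aemeasurable
  exact (hF β Ω (μ.map π) μ π ⟨hπ, rfl⟩ X Y).symm.trans
    (hF β Ω' (μ.map π) μ' π' ⟨hπ', h.symm⟩ X Y)

theorem eq_of_jointDist_eq_general (F : PairFunctional)
    (hpb : PF.PullbackInvariant F)
    {Ω Ω' : Type} [MeasurableSpace Ω] [MeasurableSpace Ω']
    (μ : Measure Ω) (μ' : Measure Ω') [IsProbabilityMeasure μ] [IsProbabilityMeasure μ']
    {𝒳 𝒴 : Type} [Fintype 𝒳] [Fintype 𝒴]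
    (X : Ω → 𝒳) (Y : Ω → 𝒴) (X' : Ω' → 𝒳) (Y' : Ω' → 𝒴)
    (hX : ∀ a, MeasurableSet (X ⁻¹' {a})) (hY : ∀ b, MeasurableSet (Y ⁻¹' {b}))
    (hX' : ∀ a, MeasurableSet (X' ⁻¹' {a})) (hY' : ∀ b, MeasurableSet (Y' ⁻¹' {b}))
    (hjoint : ∀ a b,
      jointDist μ ⟨𝒳, inferInstance, X, hX⟩ ⟨𝒴, inferInstance, Y, hY⟩ a b
        = jointDist μ' ⟨𝒳, inferInstance, X', hX'⟩ ⟨𝒴, inferInstance, Y', hY'⟩ a b) :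
    F Ω μ ⟨𝒳, inferInstance, X, hX⟩ ⟨𝒴, inferInstance, Y, hY⟩
      = F Ω' μ' ⟨𝒳, inferInstance, X', hX'⟩ ⟨𝒴, inferInstance, Y', hY'⟩ := by
  let _ : MeasurableSpace (𝒳 × 𝒴) := ⊤
  have hπ := measurable_prodMk_of_measurableSet_preimage_singleton hX hY
  have hπ' := measurable_prodMk_of_measurableSet_preimage_singleton hX' hY'
  have hmap : μ.map (fun ω => (X ω, Y ω)) = μ'.map (fun ω => (X' ω, Y' ω)) :=
    Measure.map_eq_map_of_measure_preimage_singleton_eq hπ hπ' fun ⟨a, b⟩ => by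
      simp only [← Set.singleton_prod_singleton, Set.mk_preimage_prod]
      exact (ENNReal.toReal_eq_toReal_iff' (measure_ne_top _ _) (measure_ne_top _ _)).mp
        (hjoint a b)
  exact hpb.eq_of_map_eq hπ hπ' hmap ⟨𝒳, inferInstance, Prod.fst, fun _ => .of_discrete⟩
    ⟨𝒴, inferInstance, Prod.snd, fun _ => .of_discrete⟩

/-- A continuous, pullback-invariant map on pairs of finite random
variables depends only on the joint distribution function. -/
theorem eq_of_jointDist_eq (F : PairFunctional) (hc : PF.Continuous F)
    (hpb : PF.PullbackInvariant F)
    {Ω Ω' : Type} [MeasurableSpace Ω] [MeasurableSpace Ω']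
    (μ : Measure Ω) (μ' : Measure Ω') [IsProbabilityMeasure μ] [IsProbabilityMeasure μ']
    {𝒳 𝒴 : Type} [Fintype 𝒳] [Fintype 𝒴]
    (X : Ω → 𝒳) (Y : Ω → 𝒴) (X' : Ω' → 𝒳) (Y' : Ω' → 𝒴)
    (hX : ∀ a, MeasurableSet (X ⁻¹' {a})) (hY : ∀ b, MeasurableSet (Y ⁻¹' {b}))
    (hX' : ∀ a, MeasurableSet (X' ⁻¹' {a})) (hY' : ∀ b, MeasurableSet (Y' ⁻¹' {b}))
    (hjoint : ∀ a b,
      jointDist μ ⟨𝒳, inferInstance, X, hX⟩ ⟨𝒴, inferInstance, Y, hY⟩ a b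
        = jointDist μ' ⟨𝒳, inferInstance, X', hX'⟩ ⟨𝒴, inferInstance, Y', hY'⟩ a b) :
    F Ω μ ⟨𝒳, inferInstance, X, hX⟩ ⟨𝒴, inferInstance, Y, hY⟩
      = F Ω' μ' ⟨𝒳, inferInstance, X', hX'⟩ ⟨𝒴, inferInstance, Y', hY'⟩ :=
  eq_of_jointDist_eq_general F hpb μ μ' X Y X' Y' hX hY hX' hY' hjoint
end

section
/- Let F be a map assigning a real number F(X,Y) to every ordered pair of finite random variables defined on a common probability space, and suppose F is symmetric and weakly functorial. Then for every finite random variable X with support 𝒳, every bijection f : 𝒳 → 𝒴, and every constant random variable C on the same probability space, F(X,C) - F(f∘X, C) + F(f∘X, f∘X) = F(f∘X, C) - F(X,C) + F(X,X). -/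
open MeasureTheory Filter Topology

section Recoding

variable {Ω : Type} [MeasurableSpace Ω] (μ : Measure Ω) {X Y : FRV Ω} {g : X.α → Y.α}

theorem FRV.preimage_singleton_of_injective_comp (hg : Function.Injective g)
    (hY : Y.X = g ∘ X.X) (x : X.α) : Y.X ⁻¹' {g x} = X.X ⁻¹' {x} := by
  rw [hY, Set.preimage_comp, ← Set.image_singleton, hg.preimage_image]

theorem FRV.pmf_of_injective_comp (hg : Function.Injective g) (hY : Y.X = g ∘ X.X)
    (x : X.α) : Y.pmf μ (g x) = X.pmf μ x := by
  rw [pmf, pmf, preimage_singleton_of_injective_comp hg hY]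

theorem condDist_of_injective_comp_left (hg : Function.Injective g) (hY : Y.X = g ∘ X.X)
    (Z : FRV Ω) (x : X.α) : condDist μ Y Z (g x) = condDist μ X Z x := by
  funext z
  simp only [condDist, jointDist, FRV.pmf_of_injective_comp μ hg hY,
    FRV.preimage_singleton_of_injective_comp hg hY]

theorem condDist_of_injective_comp_self (hg : Function.Injective g) (hY : Y.X = g ∘ X.X)
    {x : X.α} (hx : X.pmf μ x ≠ 0) : condDist μ X Y x (g x) = 1 := by
  rw [condDist, if_pos hx, jointDist, FRV.preimage_singleton_of_injective_comp hg hY,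
    Set.inter_self]
  exact div_self hx

/-- The mediator is `(z, x) ↦ g x`. -/
theorem isMarkovTriangle_of_injective_comp (hg : Function.Injective g) (hY : Y.X = g ∘ X.X)
    (Z : FRV Ω) : IsMarkovTriangle μ X Y Z := by
  refine ⟨fun p => g p.2, fun z x => ?_⟩
  by_cases hx : X.pmf μ x = 0
  · simp [condDist, hx]
  · rw [condDist_of_injective_comp_left μ hg hY, condDist_of_injective_comp_self μ hg hY hx,
      mul_one]

end Recoding

theorem symm_weaklyFunctorial_eq_general (F : PairFunctional) (hs : PF.Symm F)
    (hw : PF.WeaklyFunctorial F) {Ω : Type} [MeasurableSpace Ω] (μ : Measure Ω)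
    [IsProbabilityMeasure μ] (X : FRV Ω) {𝒴 : Type} [Fintype 𝒴]
    (f : X.α → 𝒴) (hf : Function.Bijective f) (C : FRV Ω) :
    F Ω μ X C - F Ω μ (X.map f) C + F Ω μ (X.map f) (X.map f)
      = F Ω μ (X.map f) C - F Ω μ X C + F Ω μ X X := by
  set e := Equiv.ofBijective f hf
  have hX : X.X = e.symm ∘ (X.map f).X := funext fun ω => (e.symm_apply_apply (X.X ω)).symm
  have forward := hw Ω μ X (X.map f) C (isMarkovTriangle_of_injective_comp μ hf.injective rfl C)
  have backward :=
    hw Ω μ (X.map f) X C (isMarkovTriangle_of_injective_comp μ e.symm.injective hX C)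
  linarith [hs Ω μ X (X.map f)]

/-- If `F` is symmetric and weakly functorial, then for every bijection
`f` and constant random variable `C`,
`F(X,C) - F(f∘X,C) + F(f∘X,f∘X) = F(f∘X,C) - F(X,C) + F(X,X)`. -/
theorem symm_weaklyFunctorial_eq (F : PairFunctional) (hs : PF.Symm F)
    (hw : PF.WeaklyFunctorial F) {Ω : Type} [MeasurableSpace Ω] (μ : Measure Ω)
    [IsProbabilityMeasure μ] (X : FRV Ω) {𝒴 : Type} [Fintype 𝒴]
    (f : X.α → 𝒴) (hf : Function.Bijective f) (C : FRV Ω) (hC : C.IsConstant) :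
    F Ω μ X C - F Ω μ (X.map f) C + F Ω μ (X.map f) (X.map f)
      = F Ω μ (X.map f) C - F Ω μ X C + F Ω μ X X :=
  symm_weaklyFunctorial_eq_general F hs hw μ X f hf C
end

section
/- (Faddeev's characterization of Shannon entropy.) Let 𝒮 be a map sending every probability distribution on a finite set to a non-negative real number, and suppose: (i) 𝒮 is continuous, i.e., if pₙ : 𝒳 → [0,1] is a sequence of probability distributions on a finite set 𝒳 converging pointwise to p, then 𝒮(p) = lim_{n→∞} 𝒮(pₙ); (ii) 𝒮(1) = 0 for the unique distribution 1 on a one-element set; (iii) 𝒮(q) = 𝒮(q∘f) for every probability distribution q : 𝒴 → [0,1] and every bijection f : 𝒳 → 𝒴; (iv) 𝒮(⊕_{x∈𝒳} p(x)q^x) = 𝒮(p) + ∑_{x∈𝒳} p(x)𝒮(q^x) for every probability distribution p : 𝒳 → [0,1] on a finite set 𝒳 and every family of finite probability distributions q^x : 𝒴^x → [0,1] indexed by 𝒳, where ⊕_{x∈𝒳} p(x)q^x : ∐_x 𝒴^x → [0,1] is the distribution given by (x̃, y) ↦ p(x̃)q^{x̃}(y). Then there exists a constant c ≥ 0 such that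 𝒮(p) = c·H(p) for every finite probability distribution p, where H(p) = -∑_x p(x) log p(x) is the Shannon entropy. -/
open MeasureTheory Filter Topology

/-!
Following Faddeev, put `F n = S(1/n, …, 1/n)` (`uniformValue S n`). Splitting a uniform
distribution into uniform blocks (chain rule and relabelling) gives `F (a * b) = F a + F b`, and
`F (n + 1) - n / (n + 1) * F n = S(n / (n + 1), 1 / (n + 1))`, which tends to `S(1, 0) = 0` by
continuity; hence `F (n + 1) - F n → 0`. By Erdős's theorem a completely additive function with
vanishing increments is `c * log`: subtracting `c * log` leaves a function vanishing at `2`, which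
base-2 expansion shows to be `o(log n)`, and a completely additive `o(log)` function is `0`.
Grouping once more gives `S(k / N) = c * H(k / N)` for positive integer weights `k`, and
continuity extends this to every distribution.
-/

open Asymptotics

def IsCompletelyAdditive (f : ℕ → ℝ) : Prop :=
  ∀ a b, 0 < a → 0 < b → f (a * b) = f a + f b

lemma abs_sub_le_of_forall_abs_succ_sub_le {f : ℕ → ℝ} {K : ℕ} {ε : ℝ}
    (hK : ∀ j, K ≤ j → |f (j + 1) - f j| ≤ ε) {a b : ℕ} (hKa : K ≤ a) (hab : a ≤ b) :
    |f b - f a| ≤ (b - a : ℕ) * ε := by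
  have := dist_le_Ico_sum_of_dist_le (f := f) (d := fun _ => ε) hab
    fun hk _ => by rw [Real.dist_eq, abs_sub_comm]; exact hK _ (hKa.trans hk)
  simpa [Real.dist_eq, abs_sub_comm] using this

namespace IsCompletelyAdditive

variable {f : ℕ → ℝ}

lemma map_one (hf : IsCompletelyAdditive f) : f 1 = 0 := by
  simpa using hf 1 1 one_pos one_pos

lemma map_pow (hf : IsCompletelyAdditive f) {n : ℕ} (hn : 0 < n) (k : ℕ) :
    f (n ^ k) = k * f n := by
  induction k with
  | zero => simp [hf.map_one]
  | succ k ih =>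
    rw [pow_succ, hf _ _ (pow_pos hn k) hn, ih]
    push_cast
    ring

lemma sub_mul_log (hf : IsCompletelyAdditive f) (c : ℝ) :
    IsCompletelyAdditive fun n => f n - c * Real.log n := by
  intro a b ha hb
  dsimp only
  rw [hf a b ha hb, Nat.cast_mul,
    Real.log_mul (Nat.cast_ne_zero.2 ha.ne') (Nat.cast_ne_zero.2 hb.ne')]
  ring

/-- Evaluating along the powers `n ^ k` turns `f = o(log)` into `k * f n = o(k * log n)`. -/
lemma eq_zero_of_isLittleO_log (hf : IsCompletelyAdditive f)
    (ho : f =o[atTop] fun n : ℕ => Real.log n) {n : ℕ} (hn : 0 < n) : f n = 0 := by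
  obtain rfl | hn1 := eq_or_lt_of_le (Nat.one_le_iff_ne_zero.2 hn.ne')
  · exact hf.map_one
  have hlog : Real.log n ≠ 0 := (Real.log_pos (by exact_mod_cast hn1)).ne'
  have hpow := (ho.comp_tendsto (tendsto_pow_atTop_atTop_of_one_lt hn1)).tendsto_div_nhds_zero
  have hconst : (fun _ : ℕ => f n / Real.log n) =ᶠ[atTop]
      fun k => (f ∘ (n ^ ·)) k / ((fun m : ℕ => Real.log m) ∘ (n ^ ·)) k := by
    filter_upwards [eventually_ge_atTop 1] with k hk
    have hk0 : (k : ℝ) ≠ 0 := by positivity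
    simp only [Function.comp, hf.map_pow hn, Nat.cast_pow, Real.log_pow]
    field_simp
  simpa [hlog] using tendsto_nhds_unique (tendsto_const_nhds.congr' hconst) hpow

lemma abs_le_add_mul_logb (hf : IsCompletelyAdditive f) {m : ℕ} (hm : 2 ≤ m) (hfm : f m = 0)
    {K : ℕ} {ε : ℝ} (hε : 0 ≤ ε) (hK : ∀ j, K ≤ j → |f (j + 1) - f j| ≤ ε) :
    ∃ B, ∀ n, 0 < n → |f n| ≤ B + m * ε * Real.logb m n := by
  have hm1 : (1 : ℝ) < m := by exact_mod_cast hm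
  refine ⟨∑ j ∈ Finset.range ((K + 1) * m), |f j|, fun n hn => ?_⟩
  induction n using Nat.strong_induction_on with
  | _ n ih =>
  by_cases hsmall : n < (K + 1) * m
  · have hlogb : 0 ≤ Real.logb m n := Real.logb_nonneg hm1 (by exact_mod_cast hn)
    have := Finset.single_le_sum (fun j _ => abs_nonneg (f j)) (Finset.mem_range.2 hsmall)
    nlinarith [mul_nonneg (mul_nonneg (Nat.cast_nonneg m) hε) hlogb]
  -- write `n = m * q + r` with `r < m`; then `f n ≈ f (m * q) = f q` and `logb m q ≤ logb m n - 1`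
  replace hsmall := not_lt.1 hsmall
  set q := n / m
  have hqK : K + 1 ≤ q := (Nat.le_div_iff_mul_le (by omega)).2 hsmall
  have hmq : m * q ≤ n := Nat.mul_div_le n m
  have hrem : n - m * q < m := by
    rw [← Nat.mod_def]
    exact Nat.mod_lt n (by omega)
  have hstep : |f n - f (m * q)| ≤ m * ε :=
    (abs_sub_le_of_forall_abs_succ_sub_le hK (by nlinarith) hmq).trans
      (mul_le_mul_of_nonneg_right (by exact_mod_cast hrem.le) hε)
  have hfq : f (m * q) = f q := by rw [hf m q (by omega) (by omega), hfm, zero_add]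
  have hlogb : Real.logb m q + 1 ≤ Real.logb m n := by
    rw [← Real.logb_self_eq_one hm1, add_comm,
      ← Real.logb_mul (by norm_cast; omega) (by norm_cast; omega)]
    exact Real.logb_le_logb_of_le hm1 (by norm_cast; nlinarith) (by exact_mod_cast hmq)
  have ihq := ih q (Nat.div_lt_self hn (by omega)) (by omega)
  rw [hfq] at hstep
  nlinarith [abs_sub_abs_le_abs_sub (f n) (f q), mul_nonneg (Nat.cast_nonneg m) hε]

lemma isLittleO_log (hf : IsCompletelyAdditive f) {m : ℕ} (hm : 2 ≤ m) (hfm : f m = 0)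
    (hinc : Tendsto (fun n => f (n + 1) - f n) atTop (𝓝 0)) :
    f =o[atTop] fun n : ℕ => Real.log n := by
  have hlogm : 0 < Real.log m := Real.log_pos (by exact_mod_cast hm)
  rw [isLittleO_iff]
  intro c hc
  set ε := c * Real.log m / (2 * m)
  have hε : 0 < ε := by positivity
  obtain ⟨K, hK⟩ := eventually_atTop.1 (hinc.abs.eventually_lt_const (by simpa using hε))
  obtain ⟨B, hB⟩ := hf.abs_le_add_mul_logb hm hfm hε.le (K := K) fun j hj => (hK j hj).le
  have hlarge : ∀ᶠ n : ℕ in atTop, 2 * B ≤ c * Real.log n :=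
    ((Real.tendsto_log_atTop.comp tendsto_natCast_atTop_atTop).const_mul_atTop
      hc).eventually_ge_atTop (2 * B)
  filter_upwards [hlarge, eventually_ge_atTop 1] with n hn hn1
  have hmε : (m : ℝ) * ε * Real.logb m n = c / 2 * Real.log n := by
    simp only [ε, Real.logb]
    field_simp
  rw [Real.norm_eq_abs, Real.norm_eq_abs, abs_of_nonneg (Real.log_natCast_nonneg n)]
  linarith [hB n hn1]

/-- Erdős's theorem on additive arithmetic functions, in its completely additive form. -/
theorem eq_mul_log (hf : IsCompletelyAdditive f)
    (hinc : Tendsto (fun n => f (n + 1) - f n) atTop (𝓝 0)) {n : ℕ} (hn : 0 < n) :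
    f n = f 2 / Real.log 2 * Real.log n := by
  set c := f 2 / Real.log 2
  have hg := hf.sub_mul_log c
  have hg2 : f 2 - c * Real.log (2 : ℕ) = 0 := by
    have : Real.log 2 ≠ 0 := (Real.log_pos one_lt_two).ne'
    simp [c, this]
  have hginc : Tendsto (fun n => (f (n + 1) - c * Real.log ((n + 1 : ℕ) : ℝ)) -
      (f n - c * Real.log n)) atTop (𝓝 0) := by
    convert hinc.sub (Real.tendsto_log_nat_add_one_sub_log.const_mul c) using 2 <;>
      push_cast <;> ring
  have := hg.eq_zero_of_isLittleO_log (hg.isLittleO_log le_rfl hg2 hginc) hn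
  linarith

end IsCompletelyAdditive

/-- `n * a n` telescopes into `∑ k < n, (k + 1) * h k`, where `h` is the defect below; dividing
by `n * (n + 1)` bounds `a n / (n + 1)` by a Cesàro mean of `|h|`. -/
lemma tendsto_succ_sub_of_tendsto_succ_sub_mul_div {a : ℕ → ℝ}
    (ha : Tendsto (fun n => a (n + 1) - n / (n + 1) * a n) atTop (𝓝 0)) :
    Tendsto (fun n => a (n + 1) - a n) atTop (𝓝 0) := by
  set h : ℕ → ℝ := fun n => a (n + 1) - n / (n + 1) * a n
  have hsum : ∀ n : ℕ, n * a n = ∑ k ∈ Finset.range n, (k + 1) * h k := by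
    intro n
    induction n with
    | zero => simp
    | succ n ih =>
      rw [Finset.sum_range_succ, ← ih]
      simp only [h]
      push_cast
      field_simp
      ring
  have hdiv : Tendsto (fun n : ℕ => a n / (n + 1)) atTop (𝓝 0) := by
    refine squeeze_zero_norm' ?_ (by simpa using ha.abs.cesaro)
    filter_upwards [eventually_ge_atTop 1] with n hn
    have hn0 : (0 : ℝ) < n := by exact_mod_cast hn
    have hbound : |n * a n| ≤ (n + 1) * ∑ k ∈ Finset.range n, |h k| := by
      rw [hsum, Finset.mul_sum]
      refine (Finset.abs_sum_le_sum_abs _ _).trans (Finset.sum_le_sum fun k hk => ?_)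
      have : (k : ℝ) + 1 ≤ n + 1 := by
        have := Finset.mem_range.1 hk
        exact_mod_cast Nat.succ_le_succ this.le
      rw [abs_mul, abs_of_pos (by positivity : (0 : ℝ) < k + 1)]
      exact mul_le_mul_of_nonneg_right this (abs_nonneg _)
    rw [Real.norm_eq_abs, abs_div, abs_of_pos (by positivity : (0 : ℝ) < n + 1),
      div_le_iff₀ (by positivity)]
    rw [abs_mul, abs_of_pos hn0] at hbound
    calc |a n| = (n : ℝ)⁻¹ * (n * |a n|) := by field_simp
      _ ≤ (n : ℝ)⁻¹ * ((n + 1) * ∑ k ∈ Finset.range n, |h k|) := by gcongr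
      _ = _ := by ring
  convert ha.sub hdiv using 2 with n
  · simp only [h]
    field_simp
    ring
  · simp

noncomputable def uniformDist (𝒳 : Type) [Fintype 𝒳] : 𝒳 → ℝ :=
  fun _ => (Fintype.card 𝒳 : ℝ)⁻¹

section ProbDist

variable {𝒳 : Type} [Fintype 𝒳]

lemma IsProbDist.nonempty {p : 𝒳 → ℝ} (hp : IsProbDist p) : Nonempty 𝒳 := by
  by_contra h
  have := hp.2
  simp [not_nonempty_iff.1 h] at this

lemma isProbDist_uniformDist [Nonempty 𝒳] : IsProbDist (uniformDist 𝒳) :=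
  ⟨fun _ => inv_nonneg.2 (Nat.cast_nonneg _), by simp [uniformDist]⟩

lemma isProbDist_single [DecidableEq 𝒳] (x₀ : 𝒳) : IsProbDist (Pi.single x₀ (1 : ℝ)) :=
  ⟨fun x => by by_cases h : x = x₀ <;> simp [h], by simp⟩

lemma isProbDist_div_sum {k : 𝒳 → ℕ} (hk : 0 < ∑ x, k x) :
    IsProbDist fun x => (k x : ℝ) / ∑ y, (k y : ℝ) := by
  have hsum : 0 < ∑ y, (k y : ℝ) := by exact_mod_cast hk
  exact ⟨fun x => by positivity, by rw [← Finset.sum_div, div_self hsum.ne']⟩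

lemma entropyOfDist_div_sum {k : 𝒳 → ℕ} (hk : ∀ x, 0 < k x) (hsum : 0 < ∑ x, k x) :
    entropyOfDist (fun x => (k x : ℝ) / ∑ y, (k y : ℝ)) =
      Real.log (∑ y, (k y : ℝ)) - ∑ x, (k x : ℝ) / (∑ y, (k y : ℝ)) * Real.log (k x) := by
  have hN : 0 < ∑ y, (k y : ℝ) := by exact_mod_cast hsum
  have hlog : ∀ x, (k x : ℝ) / (∑ y, (k y : ℝ)) * Real.log ((k x : ℝ) / ∑ y, (k y : ℝ)) =
      (k x : ℝ) / (∑ y, (k y : ℝ)) * Real.log (k x) -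
        (k x : ℝ) / (∑ y, (k y : ℝ)) * Real.log (∑ y, (k y : ℝ)) := fun x => by
    rw [Real.log_div (by exact_mod_cast (hk x).ne') hN.ne']
    ring
  simp only [entropyOfDist, hlog, Finset.sum_sub_distrib, ← Finset.sum_mul,
    (isProbDist_div_sum hsum).2]
  ring

/-- The weights are `k M x = ⌊M p x⌋ + 1`. -/
lemma IsProbDist.exists_tendsto_div_sum {p : 𝒳 → ℝ} (hp : IsProbDist p) :
    ∃ k : ℕ → 𝒳 → ℕ, (∀ M x, 0 < k M x) ∧
      ∀ x, Tendsto (fun M => (k M x : ℝ) / ∑ y, (k M y : ℝ)) atTop (𝓝 (p x)) := by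
  refine ⟨fun M x => ⌊p x * M⌋₊ + 1, fun M x => Nat.succ_pos _, ?_⟩
  have hk : ∀ x, Tendsto (fun M : ℕ => ((⌊p x * M⌋₊ + 1 : ℕ) : ℝ) / M) atTop (𝓝 (p x)) := by
    intro x
    have hfloor := (tendsto_nat_floor_mul_div_atTop (hp.1 x)).comp tendsto_natCast_atTop_atTop
    simpa [add_div] using hfloor.add tendsto_one_div_atTop_nhds_zero_nat
  have hN : Tendsto (fun M : ℕ => (∑ y, ((⌊p y * M⌋₊ + 1 : ℕ) : ℝ)) / M) atTop (𝓝 1) := by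
    rw [← hp.2]
    simpa only [Finset.sum_div] using tendsto_finsetSum _ fun y _ => hk y
  intro x
  have hlim := (hk x).div hN one_ne_zero
  rw [div_one] at hlim
  refine hlim.congr' ?_
  filter_upwards [eventually_ge_atTop 1] with M hM
  rw [Pi.div_apply, div_div_div_cancel_right₀ (by positivity)]

lemma tendsto_entropyOfDist {ι : Type*} {l : Filter ι} {p : ι → 𝒳 → ℝ} {q : 𝒳 → ℝ}
    (h : ∀ x, Tendsto (fun i => p i x) l (𝓝 (q x))) :
    Tendsto (fun i => entropyOfDist (p i)) l (𝓝 (entropyOfDist q)) :=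
  (tendsto_finsetSum _ fun x _ => (Real.continuous_mul_log.tendsto _).comp (h x)).neg

end ProbDist

section Faddeev

variable (S : ∀ (𝒳 : Type) [Fintype 𝒳], (𝒳 → ℝ) → ℝ)

def IsRelabelInvariant : Prop :=
  ∀ (𝒳 𝒴 : Type) [Fintype 𝒳] [Fintype 𝒴] (q : 𝒴 → ℝ), IsProbDist q →
    ∀ f : 𝒳 → 𝒴, Function.Bijective f → S 𝒴 q = S 𝒳 (q ∘ f)

def HasChainRule : Prop :=
  ∀ (𝒳 : Type) [Fintype 𝒳] (p : 𝒳 → ℝ), IsProbDist p →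
    ∀ (𝒴 : 𝒳 → Type) [∀ x, Fintype (𝒴 x)] (q : ∀ x, 𝒴 x → ℝ), (∀ x, IsProbDist (q x)) →
      S (Σ x : 𝒳, 𝒴 x) (fun s => p s.1 * q s.1 s.2) = S 𝒳 p + ∑ x, p x * S (𝒴 x) (q x)

noncomputable def uniformValue (n : ℕ) : ℝ :=
  S (Fin n) (uniformDist (Fin n))

variable {S}

namespace IsRelabelInvariant

lemma apply_uniformDist (hS : IsRelabelInvariant S) (𝒳 : Type) [Fintype 𝒳] [Nonempty 𝒳] :
    S 𝒳 (uniformDist 𝒳) = uniformValue S (Fintype.card 𝒳) := by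
  have : NeZero (Fintype.card 𝒳) := ⟨Fintype.card_ne_zero⟩
  rw [uniformValue, hS _ _ _ isProbDist_uniformDist _ (Fintype.equivFin 𝒳).bijective]
  congr 1
  funext x
  simp [uniformDist]

lemma apply_single_eq (hS : IsRelabelInvariant S) {𝒳 𝒴 : Type} [Fintype 𝒳] [Fintype 𝒴]
    [DecidableEq 𝒳] [DecidableEq 𝒴] (x₀ : 𝒳) (y₀ : 𝒴)
    (h : Fintype.card 𝒳 = Fintype.card 𝒴) :
    S 𝒳 (Pi.single x₀ 1) = S 𝒴 (Pi.single y₀ 1) := by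
  let e := (Fintype.equivOfCardEq h).trans (Equiv.swap (Fintype.equivOfCardEq h x₀) y₀)
  have he : e.symm y₀ = x₀ := by simp [e]
  rw [hS 𝒳 𝒴 _ (isProbDist_single y₀) e e.bijective, Pi.single_comp_equiv, he]

lemma uniformValue_one (hS : IsRelabelInvariant S) (hunit : S PUnit (fun _ => 1) = 0) :
    uniformValue S 1 = 0 := by
  rw [← Fintype.card_punit, ← hS.apply_uniformDist PUnit, ← hunit]
  congr 1
  funext
  simp [uniformDist]

end IsRelabelInvariant

namespace HasChainRule

/-- Faddeev's grouping identity: split the uniform distribution on `∑ k` points into blocks. -/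
lemma uniformValue_sum (hadd : HasChainRule S) (hS : IsRelabelInvariant S) {𝒳 : Type}
    [Fintype 𝒳] [Nonempty 𝒳] {k : 𝒳 → ℕ} (hk : ∀ x, 0 < k x) :
    uniformValue S (∑ x, k x) = S 𝒳 (fun x => (k x : ℝ) / ∑ y, (k y : ℝ)) +
      ∑ x, (k x : ℝ) / (∑ y, (k y : ℝ)) * uniformValue S (k x) := by
  have : ∀ x, NeZero (k x) := fun x => ⟨(hk x).ne'⟩
  have : Nonempty (Σ x, Fin (k x)) := ⟨⟨Classical.arbitrary 𝒳, 0⟩⟩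
  have hcard : Fintype.card (Σ x, Fin (k x)) = ∑ x, k x := by simp
  have hsigma : (fun s : Σ x, Fin (k x) => (k s.1 : ℝ) / (∑ y, (k y : ℝ)) *
      uniformDist (Fin (k s.1)) s.2) = uniformDist (Σ x, Fin (k x)) := by
    funext s
    have := hk s.1
    simp [uniformDist]
    field_simp
  have := hadd 𝒳 _ (isProbDist_div_sum (Finset.sum_pos (fun x _ => hk x) Finset.univ_nonempty))
    (fun x => Fin (k x)) (fun x => uniformDist (Fin (k x))) fun _ => isProbDist_uniformDist
  rwa [hsigma, hS.apply_uniformDist, hcard] at this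

lemma isCompletelyAdditive_uniformValue (hadd : HasChainRule S) (hS : IsRelabelInvariant S) :
    IsCompletelyAdditive (uniformValue S) := by
  intro a b ha hb
  have : NeZero a := ⟨ha.ne'⟩
  have hblock := hadd.uniformValue_sum hS (𝒳 := Fin a) (k := fun _ => b) fun _ => hb
  have hp : (fun _ : Fin a => (b : ℝ) / ∑ _ : Fin a, (b : ℝ)) = uniformDist (Fin a) := by
    funext
    have : (b : ℝ) ≠ 0 := by positivity
    simp [uniformDist]
    field_simp
  rw [hp] at hblock
  simp only [Finset.sum_const, Finset.card_univ, Fintype.card_fin, smul_eq_mul, nsmul_eq_mul]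
    at hblock
  rw [hblock]
  congr 1
  field_simp

lemma apply_single_true_eq_zero (hadd : HasChainRule S) (hS : IsRelabelInvariant S)
    (hunit : S PUnit (fun _ => 1) = 0) : S Bool (Pi.single true 1) = 0 := by
  -- The point mass on four points is both `δ ⊕ δ`, of value `2 S(δ)`, and `δ ⊕ (unit, uniform₃)`,
  -- of value `S(δ) + S(unit) = S(δ)`.
  have hpair := hadd Bool _ (isProbDist_single true) (fun _ => Bool) (fun _ => Pi.single true 1)
    fun _ => isProbDist_single true
  have hsplit := hadd Bool _ (isProbDist_single true) (fun b => Fin (cond b 1 3))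
    (fun b => uniformDist (Fin (cond b 1 3))) fun b => by
      cases b
      exacts [isProbDist_uniformDist (𝒳 := Fin 3), isProbDist_uniformDist (𝒳 := Fin 1)]
  have hpair_single : (fun s : Σ _ : Bool, Bool => (Pi.single true 1 : Bool → ℝ) s.1 *
      (Pi.single true 1 : Bool → ℝ) s.2) = (Pi.single ⟨true, true⟩ 1 : (Σ _ : Bool, Bool) → ℝ) := by
    funext ⟨b, c⟩
    cases b <;> cases c <;> simp
  have hsplit_single : (fun s : Σ b : Bool, Fin (cond b 1 3) => (Pi.single true 1 : Bool → ℝ) s.1 *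
      uniformDist (Fin (cond s.1 1 3)) s.2) =
      (Pi.single ⟨true, (0 : Fin 1)⟩ 1 : (Σ b : Bool, Fin (cond b 1 3)) → ℝ) := by
    funext ⟨b, i⟩
    cases b
    · simp
    · obtain rfl : i = (0 : Fin 1) := Subsingleton.elim (α := Fin 1) _ _
      simp [uniformDist]
  rw [hpair_single, hS.apply_single_eq (⟨true, true⟩ : Σ _ : Bool, Bool)
    (⟨true, (0 : Fin 1)⟩ : Σ b : Bool, Fin (cond b 1 3)) rfl] at hpair
  rw [hsplit_single] at hsplit
  simp only [Fintype.sum_bool, Pi.single_eq_same, ne_eq, Bool.false_eq_true, not_false_eq_true,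
    Pi.single_eq_of_ne, one_mul, zero_mul, add_zero] at hpair hsplit
  have hone : S (Fin (cond true 1 3)) (uniformDist _) = 0 := hS.uniformValue_one hunit
  linarith

/-- Grouping `n + 1` uniform points as `n` and `1` gives
`F (n + 1) - n / (n + 1) * F n = S (n / (n + 1), 1 / (n + 1))`, which tends to `S (1, 0) = 0`. -/
lemma tendsto_uniformValue_succ_sub (hadd : HasChainRule S) (hS : IsRelabelInvariant S)
    (hunit : S PUnit (fun _ => 1) = 0)
    (hcont : ∀ (pn : ℕ → Bool → ℝ) (p : Bool → ℝ), (∀ n, IsProbDist (pn n)) → IsProbDist p →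
      (∀ x, Tendsto (fun n => pn n x) atTop (𝓝 (p x))) →
      Tendsto (fun n => S Bool (pn n)) atTop (𝓝 (S Bool p))) :
    Tendsto (fun n => uniformValue S (n + 1) - uniformValue S n) atTop (𝓝 0) := by
  set q : ℕ → Bool → ℝ := fun n b => (cond b n 1 : ℕ) / ∑ c : Bool, ((cond c n 1 : ℕ) : ℝ)
  have hq : ∀ n, IsProbDist (q n) := fun n => isProbDist_div_sum (by simp)
  have hrec : ∀ᶠ n in atTop,
      S Bool (q n) = uniformValue S (n + 1) - n / (n + 1) * uniformValue S n := by
    filter_upwards [eventually_ge_atTop 1] with n hn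
    have := hadd.uniformValue_sum hS (k := fun b => cond b n 1) fun b => by cases b <;> simp; omega
    simp [hS.uniformValue_one hunit] at this
    rw [this, add_sub_cancel_right]
    congr 1
    funext b
    simp [q]
  have hlim : Tendsto (fun n => S Bool (q n)) atTop (𝓝 0) := by
    rw [← hadd.apply_single_true_eq_zero hS hunit]
    refine hcont q _ hq (isProbDist_single true) fun b => ?_
    cases b
    · simpa [q, Fintype.sum_bool] using tendsto_one_div_add_atTop_nhds_zero_nat (𝕜 := ℝ)
    · simpa [q, Fintype.sum_bool] using tendsto_natCast_div_add_atTop (1 : ℝ)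
  exact tendsto_succ_sub_of_tendsto_succ_sub_mul_div (hlim.congr' hrec)

lemma apply_div_sum (hadd : HasChainRule S) (hS : IsRelabelInvariant S) {c : ℝ}
    (hc : ∀ n, 0 < n → uniformValue S n = c * Real.log n) {𝒳 : Type} [Fintype 𝒳] [Nonempty 𝒳]
    {k : 𝒳 → ℕ} (hk : ∀ x, 0 < k x) :
    S 𝒳 (fun x => (k x : ℝ) / ∑ y, (k y : ℝ)) =
      c * entropyOfDist (fun x => (k x : ℝ) / ∑ y, (k y : ℝ)) := by
  have hsum : 0 < ∑ x, k x := Finset.sum_pos (fun x _ => hk x) Finset.univ_nonempty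
  have hblock := hadd.uniformValue_sum hS hk
  have hblocks : ∑ x, (k x : ℝ) / (∑ y, (k y : ℝ)) * uniformValue S (k x) =
      c * ∑ x, (k x : ℝ) / (∑ y, (k y : ℝ)) * Real.log (k x) := by
    rw [Finset.mul_sum]
    exact Finset.sum_congr rfl fun x _ => by rw [hc _ (hk x)]; ring
  rw [hc _ hsum, hblocks, Nat.cast_sum] at hblock
  rw [entropyOfDist_div_sum hk hsum]
  linarith

end HasChainRule

end Faddeev

/-- Faddeev's characterization of Shannon entropy: a continuous,
bijection-invariant, strongly additive non-negative map on finite probability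
distributions which vanishes on the one-point distribution is a non-negative multiple
of the Shannon entropy. -/
theorem faddeev (S : ∀ (𝒳 : Type) [Fintype 𝒳], (𝒳 → ℝ) → ℝ)
    (hnn : ∀ (𝒳 : Type) [Fintype 𝒳] (p : 𝒳 → ℝ), IsProbDist p → 0 ≤ S 𝒳 p)
    (hcont : ∀ (𝒳 : Type) [Fintype 𝒳] (pn : ℕ → 𝒳 → ℝ) (p : 𝒳 → ℝ),
      (∀ n, IsProbDist (pn n)) → IsProbDist p →
      (∀ x, Tendsto (fun n => pn n x) atTop (𝓝 (p x))) →
      Tendsto (fun n => S 𝒳 (pn n)) atTop (𝓝 (S 𝒳 p)))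
    (hunit : S PUnit (fun _ => 1) = 0)
    (hbij : ∀ (𝒳 𝒴 : Type) [Fintype 𝒳] [Fintype 𝒴] (q : 𝒴 → ℝ), IsProbDist q →
      ∀ f : 𝒳 → 𝒴, Function.Bijective f → S 𝒴 q = S 𝒳 (q ∘ f))
    (hadd : ∀ (𝒳 : Type) [Fintype 𝒳] (p : 𝒳 → ℝ), IsProbDist p →
      ∀ (𝒴 : 𝒳 → Type) [∀ x, Fintype (𝒴 x)] (q : ∀ x, 𝒴 x → ℝ),
      (∀ x, IsProbDist (q x)) →
      S (Σ x : 𝒳, 𝒴 x) (fun s => p s.1 * q s.1 s.2)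
        = S 𝒳 p + ∑ x, p x * S (𝒴 x) (q x)) :
    ∃ c : ℝ, 0 ≤ c ∧ ∀ (𝒳 : Type) [Fintype 𝒳] (p : 𝒳 → ℝ), IsProbDist p →
      S 𝒳 p = c * entropyOfDist p := by
  have hS : IsRelabelInvariant S := hbij
  have hchain : HasChainRule S := hadd
  have hlog : ∀ n, 0 < n → uniformValue S n = uniformValue S 2 / Real.log 2 * Real.log n :=
    fun n => (hchain.isCompletelyAdditive_uniformValue hS).eq_mul_log
      (hchain.tendsto_uniformValue_succ_sub hS hunit (hcont Bool))
  refine ⟨uniformValue S 2 / Real.log 2,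
    div_nonneg (hnn (Fin 2) _ isProbDist_uniformDist) (Real.log_nonneg one_le_two),
    fun 𝒳 _ p hp => ?_⟩
  have := hp.nonempty
  obtain ⟨k, hk, hkp⟩ := hp.exists_tendsto_div_sum
  have hk_sum : ∀ M, 0 < ∑ x, k M x := fun M =>
    Finset.sum_pos (fun x _ => hk M x) Finset.univ_nonempty
  refine tendsto_nhds_unique (hcont 𝒳 _ p (fun M => isProbDist_div_sum (hk_sum M)) hp hkp) ?_
  simpa only [hchain.apply_div_sum hS hlog (hk _)] using (tendsto_entropyOfDist hkp).const_mul _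
end

section
/- Let F be a map assigning a real number F(X,Y) to every ordered pair of finite random variables defined on a common probability space, and suppose F is symmetric, weakly functorial, and satisfies F(X,C) = 0 for every constant random variable C. Then for every pair (X, Y) of finite random variables with supports 𝒳, 𝒴 and all bijections f : 𝒳 → 𝒳' and g : 𝒴 → 𝒴', F(X, Y) = F(f∘X, g∘Y). -/
open MeasureTheory Filter Topology

/-!
Post-composing `X` with a bijection `e` yields a Markov triangle `(Z, X, e ∘ X)` for every `Z`,
with mediator `(y, z) ↦ e⁻¹ y`. Weak functoriality applied to such a triangle with a constant
`Z` gives `F(X, e ∘ X) = F(X, X)`, and then with arbitrary `Z` gives `F(Z, e ∘ X) = F(Z, X)`.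
Symmetry moves the bijection from one argument to the other.
-/

namespace FRV

variable {Ω : Type} [MeasurableSpace Ω]

lemma map_preimage_singleton (X : FRV Ω) {β : Type} [Fintype β] (e : X.α ≃ β)
    (b : (X.map e).α) :
    (X.map e).X ⁻¹' {b} = X.X ⁻¹' {e.symm b} := by
  ext ω
  exact e.eq_symm_apply.symm

def unit (Ω : Type) [MeasurableSpace Ω] : FRV Ω where
  α := Unit
  fintype := inferInstance
  X := fun _ => ()
  meas := fun _ => by simp

lemma unit_isConstant : (unit Ω).IsConstant := fun _ _ => rfl

end FRV

section MarkovTriangle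

variable {Ω : Type} [MeasurableSpace Ω]

lemma jointDist_eq_zero_of_pmf_eq_zero {μ : Measure Ω} [IsFiniteMeasure μ] {Z X : FRV Ω}
    {x : X.α} (h : X.pmf μ x = 0) (z : Z.α) : jointDist μ Z X z x = 0 := by
  have hx : μ (X.X ⁻¹' {x}) = 0 :=
    ((ENNReal.toReal_eq_zero_iff _).mp h).resolve_right (measure_ne_top μ _)
  simp [jointDist, measure_mono_null Set.inter_subset_right hx]

lemma condDist_map_equiv (μ : Measure Ω) (Z X : FRV Ω) {β : Type} [Fintype β]
    (e : X.α ≃ β) (z : Z.α) (b : (X.map e).α) :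
    condDist μ Z (X.map e) z b = condDist μ Z X z (e.symm b) := by
  unfold condDist jointDist
  rw [FRV.map_preimage_singleton]

lemma condDist_self_map_equiv_of_pmf_ne_zero (μ : Measure Ω) (X : FRV Ω) {β : Type}
    [Fintype β] (e : X.α ≃ β) {b : (X.map e).α} (hb : X.pmf μ (e.symm b) ≠ 0) :
    condDist μ X (X.map e) (e.symm b) b = 1 := by
  unfold condDist jointDist
  rw [FRV.map_preimage_singleton, Set.inter_self, if_pos hb]
  exact div_self hb

lemma isMarkovTriangle_map_equiv (μ : Measure Ω) [IsFiniteMeasure μ] (Z X : FRV Ω)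
    {β : Type} [Fintype β] (e : X.α ≃ β) : IsMarkovTriangle μ Z X (X.map e) := by
  refine ⟨fun p => e.symm p.1, fun b z => (condDist_map_equiv μ Z X e z b).trans ?_⟩
  by_cases hb : X.pmf μ (e.symm b) = 0
  · simp [condDist, jointDist_eq_zero_of_pmf_eq_zero hb]
  · rw [condDist_self_map_equiv_of_pmf_ne_zero μ X e hb, one_mul]

end MarkovTriangle

namespace PF

variable {F : PairFunctional} {Ω : Type} [MeasurableSpace Ω] (μ : Measure Ω)
  [IsProbabilityMeasure μ]

lemma apply_const_left (hs : Symm F) (hv : VanishesOnConstants F) {C : FRV Ω}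
    (hC : C.IsConstant) (X : FRV Ω) : F Ω μ C X = 0 :=
  (hs Ω μ C X).trans (hv Ω μ X C hC)

lemma apply_self_map_equiv (hs : Symm F) (hw : WeaklyFunctorial F)
    (hv : VanishesOnConstants F) (X : FRV Ω) {β : Type} [Fintype β] (e : X.α ≃ β) :
    F Ω μ X (X.map e) = F Ω μ X X := by
  have h := hw Ω μ _ X _ (isMarkovTriangle_map_equiv μ (FRV.unit Ω) X e)
  rw [apply_const_left μ hs hv FRV.unit_isConstant,
    apply_const_left μ hs hv FRV.unit_isConstant] at h
  linarith

lemma apply_map_equiv_right (hs : Symm F) (hw : WeaklyFunctorial F)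
    (hv : VanishesOnConstants F) (Z X : FRV Ω) {β : Type} [Fintype β] (e : X.α ≃ β) :
    F Ω μ Z (X.map e) = F Ω μ Z X := by
  rw [hw Ω μ Z X _ (isMarkovTriangle_map_equiv μ Z X e), apply_self_map_equiv μ hs hw hv]
  ring

end PF

/-- If `F` is symmetric, weakly functorial and vanishes on constants, then
`F(X,Y) = F(f∘X, g∘Y)` for all bijections `f`, `g`. -/
theorem invariance_under_bijections (F : PairFunctional) (hs : PF.Symm F)
    (hw : PF.WeaklyFunctorial F) (hv : PF.VanishesOnConstants F)
    {Ω : Type} [MeasurableSpace Ω] (μ : Measure Ω) [IsProbabilityMeasure μ]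
    (X Y : FRV Ω) {𝒳' 𝒴' : Type} [Fintype 𝒳'] [Fintype 𝒴']
    (f : X.α → 𝒳') (g : Y.α → 𝒴')
    (hf : Function.Bijective f) (hg : Function.Bijective g) :
    F Ω μ X Y = F Ω μ (X.map f) (Y.map g) := by
  calc F Ω μ X Y = F Ω μ X (Y.map g) :=
        (PF.apply_map_equiv_right μ hs hw hv X Y (.ofBijective g hg)).symm
    _ = F Ω μ (Y.map g) X := hs Ω μ _ _
    _ = F Ω μ (Y.map g) (X.map f) :=
        (PF.apply_map_equiv_right μ hs hw hv (Y.map g) X (.ofBijective f hf)).symm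
    _ = F Ω μ (X.map f) (Y.map g) := hs Ω μ _ _
end
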